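/- Let f : ℂ → ℂ be a bijective entire function and g : ℂ → ℂ an entire function such that g(z)² = f'(z) for all z. Then g is constant, and there exist a, b ∈ ℂ with a ≠ 0, g² = a (as a constant), and f(z) = a z + b for all z. -/

import Mathlib

/-!
A bijective entire function `f` is a homeomorphism of `ℂ`, hence proper: `f z → ∞` as `z → ∞`.
So `w ↦ (f w⁻¹ - f 0)⁻¹` has a removable singularity at `0`, where it vanishes to some finite
order `n`; this gives `f z - f 0 = O(zⁿ)` at infinity, and an entire function of polynomial
growth is a polynomial (peel off one power of `z` at a time with `dslope`, then Liouville).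
An injective polynomial over an algebraically closed field of characteristic zero is affine:
`p - p 0` has `0` as its only root, so `p = a Xᵐ + b`, and `x ↦ xᵐ` sends every `m`-th root of
unity to `1`, so `m = 1`. Then `g² = f' = a`, so `g` is bounded and constant by Liouville.
-/

open Filter Topology Polynomial Asymptotics Bornology

theorem eq_one_of_injective_pow {K : Type*} [Field K] [IsSepClosed K] [CharZero K] {m : ℕ}
    (h : Function.Injective fun x : K => x ^ m) : m = 1 := by
  obtain _ | _ | k := m
  · exact absurd (h (by simp : (0 : K) ^ 0 = 1 ^ 0)) zero_ne_one
  · rfl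
  · obtain ⟨ω, hω⟩ := HasEnoughRootsOfUnity.exists_primitiveRoot K (k + 2)
    exact absurd (h (by simp [hω.pow_eq_one] : ω ^ (k + 2) = 1 ^ (k + 2))) (hω.ne_one (by omega))

theorem Polynomial.exists_eval_eq_mul_add_of_injective {K : Type*} [Field K] [IsAlgClosed K]
    [CharZero K] {p : K[X]} (hp : Function.Injective p.eval) :
    ∃ a b : K, a ≠ 0 ∧ ∀ x, p.eval x = a * x + b := by
  set q := p - C (p.eval 0)
  set m := Multiset.card q.roots
  have hroots : q.roots = Multiset.replicate m 0 :=
    Multiset.eq_replicate_card.2 fun r hr => hp (by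
      simpa [q, sub_eq_zero] using ((mem_roots'.1 hr).2 : q.IsRoot r))
  have heval : ∀ x, p.eval x = q.leadingCoeff * x ^ m + p.eval 0 := fun x => by
    have := (IsAlgClosed.splits q).eval_eq_prod_roots x
    simpa [hroots, q, sub_eq_iff_eq_add] using this
  have hpow : Function.Injective fun x : K => q.leadingCoeff * x ^ m := fun x y hxy =>
    hp (show p.eval x = p.eval y by rw [heval x, heval y]; exact congrArg (· + p.eval 0) hxy)
  have ha : q.leadingCoeff ≠ 0 := fun h0 => zero_ne_one (hpow (by simp [h0]))
  have hm : m = 1 := eq_one_of_injective_pow fun x y hxy => hpow (congrArg _ hxy)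
  exact ⟨q.leadingCoeff, p.eval 0, ha, fun x => by rw [heval, hm, pow_one]⟩

theorem Differentiable.exists_polynomial_of_isBigO_pow {n : ℕ} {h : ℂ → ℂ}
    (hh : Differentiable ℂ h) (hO : h =O[cobounded ℂ] (· ^ n)) :
    ∃ p : ℂ[X], ∀ z, h z = p.eval z := by
  induction n generalizing h with
  | zero =>
    have hb : IsBounded (Set.range h) := by
      rw [hh.continuous.isBounded_range_iff_isBigO, ← Metric.cobounded_eq_cocompact]
      simp only [pow_zero] at hO
      exact hO.trans (isBigO_const_const _ one_ne_zero _)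
    exact ⟨C (h 0), fun z => by simpa using hh.apply_eq_apply_of_bounded hb z 0⟩
  | succ n ih =>
    have hd : Differentiable ℂ (dslope h 0) := fun z =>
      (Complex.differentiableOn_dslope (c := 0) univ_mem |>.2 hh.differentiableOn z trivial)
        |>.differentiableAt univ_mem
    have hsub : (fun z => h z - h 0) =O[cobounded ℂ] (· ^ (n + 1)) := by
      have hpow : Tendsto (fun z : ℂ => ‖z ^ (n + 1)‖) (cobounded ℂ) atTop :=
        ((tendsto_pow_atTop n.succ_ne_zero).comp tendsto_norm_cobounded_atTop).congr
          fun z => (norm_pow z _).symm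
      exact hO.sub ((isBigO_const_one ℂ (h 0) _).trans (isLittleO_one_left_iff ℂ |>.2 hpow).isBigO)
    have hdO : dslope h 0 =O[cobounded ℂ] (· ^ n) := by
      refine ((isBigO_refl (fun z : ℂ => z⁻¹) (cobounded ℂ)).mul hsub).congr' ?_ ?_
      · filter_upwards [eventually_ne_cobounded 0] with z hz
        simp [dslope_of_ne _ hz, slope_def_field, div_eq_inv_mul]
      · filter_upwards [eventually_ne_cobounded 0] with z hz
        field_simp
        ring
    obtain ⟨p, hp⟩ := ih hd hdO
    refine ⟨C (h 0) + X * p, fun z => ?_⟩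
    have hslope := sub_smul_dslope h 0 z
    simp only [sub_zero, smul_eq_mul] at hslope
    simp [← hp, hslope]

theorem analyticAt_inv_of_tendsto_cobounded {G : ℂ → ℂ} {c : ℂ}
    (hG : ∀ᶠ w in 𝓝[≠] c, DifferentiableAt ℂ G w) (hlim : Tendsto G (𝓝[≠] c) (cobounded ℂ))
    (hc : G c = 0) : AnalyticAt ℂ (fun w => (G w)⁻¹) c := by
  refine Complex.analyticAt_of_differentiable_on_punctured_nhds_of_continuousAt ?_ ?_
  · filter_upwards [hG, hlim.eventually_ne_cobounded 0] with w hGw hw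
    exact hGw.inv hw
  · rw [← continuousWithinAt_compl_self, ContinuousWithinAt, hc, inv_zero]
    exact tendsto_inv₀_cobounded.comp hlim

theorem AnalyticAt.exists_inv_isBigO_inv_pow {𝕜 : Type*} [NontriviallyNormedField 𝕜]
    {F : 𝕜 → 𝕜} {c : 𝕜} (hF : AnalyticAt 𝕜 F c) (hne : ∀ᶠ w in 𝓝[≠] c, F w ≠ 0) :
    ∃ n : ℕ, (fun w => (F w)⁻¹) =O[𝓝[≠] c] fun w => ((w - c) ^ n)⁻¹ := by
  have hnz : ¬∀ᶠ w in 𝓝 c, F w = 0 := fun h0 =>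
    ((h0.filter_mono nhdsWithin_le_nhds).and hne).exists.elim fun _ hw => hw.2 hw.1
  obtain ⟨n, u, hu, hu0, hFu⟩ := hF.exists_eventuallyEq_pow_smul_nonzero_iff.2 hnz
  have hbdd : (fun w => (u w)⁻¹) =O[𝓝[≠] c] (fun _ => (1 : 𝕜)) :=
    ((hu.continuousAt.inv₀ hu0).tendsto.isBigO_one 𝕜).mono nhdsWithin_le_nhds
  refine ⟨n, ((isBigO_refl (fun w => ((w - c) ^ n)⁻¹) _).mul hbdd).congr' ?_ (by simp)⟩
  filter_upwards [hFu.filter_mono nhdsWithin_le_nhds] with w hw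
  simp [hw, mul_comm]

theorem Differentiable.exists_sub_isBigO_pow_of_tendsto_cobounded {f : ℂ → ℂ}
    (hf : Differentiable ℂ f) (hlim : Tendsto f (cobounded ℂ) (cobounded ℂ)) :
    ∃ n : ℕ, (fun z => f z - f 0) =O[cobounded ℂ] (· ^ n) := by
  have hpole : Tendsto (fun w => f w⁻¹ - f 0) (𝓝[≠] 0) (cobounded ℂ) :=
    (tendsto_sub_const_cobounded _).comp (hlim.comp tendsto_inv₀_nhdsNE_zero)
  have hdiff : ∀ᶠ w in 𝓝[≠] (0 : ℂ), DifferentiableAt ℂ (fun w => f w⁻¹ - f 0) w := by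
    filter_upwards [self_mem_nhdsWithin] with w hw
    exact ((hf _).comp w (differentiableAt_inv hw)).sub_const _
  -- `(f 0⁻¹ - f 0)⁻¹ = 0` because `0⁻¹ = 0`: the reciprocal takes its limit value at `0`
  obtain ⟨n, hn⟩ :=
    (analyticAt_inv_of_tendsto_cobounded hdiff hpole (by simp)).exists_inv_isBigO_inv_pow
      ((hpole.eventually_ne_cobounded 0).mono fun _ => inv_ne_zero)
  exact ⟨n, (hn.comp_tendsto tendsto_inv₀_cobounded').congr (fun _ => by simp) (fun _ => by simp)⟩

theorem Differentiable.exists_polynomial_of_tendsto_cobounded {f : ℂ → ℂ}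
    (hf : Differentiable ℂ f) (hlim : Tendsto f (cobounded ℂ) (cobounded ℂ)) :
    ∃ p : ℂ[X], ∀ z, f z = p.eval z := by
  obtain ⟨n, hn⟩ := hf.exists_sub_isBigO_pow_of_tendsto_cobounded hlim
  obtain ⟨p, hp⟩ := (hf.sub_const (f 0)).exists_polynomial_of_isBigO_pow hn
  exact ⟨p + C (f 0), fun z => by simp [← hp]⟩

theorem Differentiable.tendsto_cobounded_of_bijective {f : ℂ → ℂ} (hf : Differentiable ℂ f)
    (hbij : Function.Bijective f) : Tendsto f (cobounded ℂ) (cobounded ℂ) := by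
  have hopen : IsOpenMap f :=
    (AnalyticOnNhd.is_constant_or_isOpenMap fun z _ => hf.analyticAt z).resolve_left
      fun ⟨w, hw⟩ => zero_ne_one (hbij.injective ((hw 0).trans (hw 1).symm))
  rw [Metric.cobounded_eq_cocompact]
  exact ((Equiv.ofBijective f hbij).toHomeomorphOfContinuousOpen hf.continuous
    hopen).map_cocompact.le

theorem stmt_7 (f g : ℂ → ℂ) (hf : Differentiable ℂ f) (hbij : Function.Bijective f)
    (hg : Differentiable ℂ g) (hsq : ∀ z, g z ^ 2 = deriv f z) :
    (∀ z w : ℂ, g z = g w) ∧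
      ∃ a b : ℂ, a ≠ 0 ∧ (∀ z, g z ^ 2 = a) ∧ ∀ z, f z = a * z + b := by
  obtain ⟨p, hp⟩ :=
    hf.exists_polynomial_of_tendsto_cobounded (hf.tendsto_cobounded_of_bijective hbij)
  obtain ⟨a, b, ha, hab⟩ := p.exists_eval_eq_mul_add_of_injective (by
    simpa only [← funext hp] using hbij.injective)
  have hfab : ∀ z, f z = a * z + b := fun z => (hp z).trans (hab z)
  have hga : ∀ z, g z ^ 2 = a := fun z => by
    rw [hsq, show f = fun z => a * z + b from funext hfab]
    simp
  have hbdd : IsBounded (Set.range g) := by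
    refine isBounded_iff_forall_norm_le.2 ⟨1 + ‖a‖, ?_⟩
    rintro _ ⟨z, rfl⟩
    have hz : ‖g z‖ ^ 2 = ‖a‖ := by rw [← norm_pow, hga]
    nlinarith [sq_nonneg (‖g z‖ - 1)]
  exact ⟨hg.apply_eq_apply_of_bounded hbdd, a, b, ha, hga, hfab⟩
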